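/- arXiv:2510.11582 — 2 statements merged into one kernel-verified Lean document; each statement's English description precedes it below -/
import Mathlib

section
/- Let T : ℝ₊₊^N → ℝ₊₊^N be an MSP mapping with a fixed point x* ∈ ℝ₊₊^N (necessarily unique). Then for every starting point x₁ ∈ ℝ₊₊^N, the sequence generated by the fixed point iteration xₙ₊₁ = T(xₙ) converges to x*. -/
open MeasureTheory Filter

/-- The open positive cone in `ℝ^N`. -/
def PosCone (N : ℕ) : Set (Fin N → ℝ) := {x | ∀ i, 0 < x i}

/-- A monotonic, scalable, and positive (MSP) function on the positive cone `ℝ₊₊^N`: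
(0) it is positive on the cone, (i) monotone on the cone, (ii) scalable, and
(iii) its infimum over the cone is positive. -/
def IsMSPFun {N : ℕ} (f : (Fin N → ℝ) → ℝ) : Prop :=
  (∀ x : Fin N → ℝ, (∀ i, 0 < x i) → 0 < f x) ∧
  (∀ x y : Fin N → ℝ, (∀ i, 0 < x i) → (∀ i, 0 < y i) → x ≤ y → f x ≤ f y) ∧
  (∀ α : ℝ, 1 < α → ∀ x : Fin N → ℝ, (∀ i, 0 < x i) → f (α • x) < α * f x) ∧
  0 < sInf (f '' PosCone N)

/-- An MSP mapping: every coordinate function is an MSP function. -/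
def IsMSPMap {N : ℕ} (T : (Fin N → ℝ) → (Fin N → ℝ)) : Prop :=
  ∀ i, IsMSPFun (fun x => T x i)

/-- A monotone norm on `ℝ^N`: a genuine norm that is order-preserving on the
nonnegative cone. -/
def IsMonoNorm {N : ℕ} (nrm : (Fin N → ℝ) → ℝ) : Prop :=
  (∀ x : Fin N → ℝ, nrm x = 0 ↔ x = 0) ∧
  (∀ (a : ℝ) (x : Fin N → ℝ), nrm (a • x) = |a| * nrm x) ∧
  (∀ x y : Fin N → ℝ, nrm (x + y) ≤ nrm x + nrm y) ∧
  (∀ x y : Fin N → ℝ, (∀ i, 0 ≤ x i) → (∀ i, 0 ≤ y i) → x ≤ y → nrm x ≤ nrm y)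

section Aux

variable {N : ℕ} {T : (Fin N → ℝ) → (Fin N → ℝ)}

lemma msp_pos (hT : IsMSPMap T) {v : Fin N → ℝ} (hv : ∀ i, 0 < v i) :
    ∀ i, 0 < T v i := fun i => (hT i).1 v hv

lemma msp_mono (hT : IsMSPMap T) {u v : Fin N → ℝ} (hu : ∀ i, 0 < u i)
    (hv : ∀ i, 0 < v i) (huv : u ≤ v) : T u ≤ T v :=
  fun i => (hT i).2.1 u v hu hv huv

lemma msp_scale (hT : IsMSPMap T) {a : ℝ} (ha : 1 < a) {v : Fin N → ℝ}
    (hv : ∀ i, 0 < v i) (i : Fin N) : T (a • v) i < a * T v i :=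
  (hT i).2.2.1 a ha v hv

lemma msp_fix_le (hT : IsMSPMap T) {z w : Fin N → ℝ}
    (hz : ∀ i, 0 < z i) (hw : ∀ i, 0 < w i) (hfz : T z = z) (hfw : T w = w) :
    z ≤ w := by
  intro i
  have hne : (Finset.univ : Finset (Fin N)).Nonempty := ⟨i, Finset.mem_univ i⟩
  set β := Finset.univ.sup' hne (fun j => z j / w j) with hβdef
  have hβle : ∀ j, z j / w j ≤ β := fun j => by
    rw [hβdef]; exact Finset.le_sup' (fun j => z j / w j) (Finset.mem_univ j)
  have hβ1 : β ≤ 1 := by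
    by_contra h
    push_neg at h
    obtain ⟨i0, -, hi0⟩ := Finset.exists_mem_eq_sup' hne (fun j => z j / w j)
    have hbw : ∀ j, 0 < (β • w) j := fun j => by
      have := hw j
      simp only [Pi.smul_apply, smul_eq_mul]
      nlinarith
    have hzw : z ≤ β • w := by
      intro j
      have := (div_le_iff₀ (hw j)).mp (hβle j)
      simpa [Pi.smul_apply, smul_eq_mul, mul_comm] using this
    have h1 : z i0 = β * w i0 := by
      rw [hβdef, hi0, div_mul_cancel₀ _ (hw i0).ne']
    have : z i0 < z i0 := by
      calc z i0 = T z i0 := by rw [hfz]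
        _ ≤ T (β • w) i0 := msp_mono hT hz hbw hzw i0
        _ < β * T w i0 := msp_scale hT h hw i0
        _ = β * w i0 := by rw [hfw]
        _ = z i0 := h1.symm
    exact lt_irrefl _ this
  exact (div_le_one (hw i)).mp ((hβle i).trans hβ1)

lemma msp_iter_pos (hT : IsMSPMap T) {v : Fin N → ℝ} (hv : ∀ i, 0 < v i) :
    ∀ n i, 0 < T^[n] v i := by
  intro n
  induction n with
  | zero => simpa using hv
  | succ n ih =>
    rw [Function.iterate_succ_apply']
    exact msp_pos hT ih

lemma msp_iter_mono (hT : IsMSPMap T) {u v : Fin N → ℝ} (hu : ∀ i, 0 < u i)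
    (hv : ∀ i, 0 < v i) (huv : u ≤ v) : ∀ n, T^[n] u ≤ T^[n] v := by
  intro n
  induction n with
  | zero => simpa using huv
  | succ n ih =>
    rw [Function.iterate_succ_apply', Function.iterate_succ_apply']
    exact msp_mono hT (msp_iter_pos hT hu n) (msp_iter_pos hT hv n) ih

lemma msp_upper (hT : IsMSPMap T) {xs : Fin N → ℝ} (hxs : ∀ i, 0 < xs i)
    (hfix : T xs = xs) {a : ℝ} (ha : 1 < a) :
    Tendsto (fun n => T^[n] (a • xs)) atTop (nhds xs) := by
  have ha0 : (0:ℝ) < a := lt_trans one_pos ha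
  set y : ℕ → Fin N → ℝ := fun n => T^[n] (a • xs) with hy
  have hapos : ∀ i, 0 < (a • xs) i := fun i => by
    simp only [Pi.smul_apply, smul_eq_mul]
    exact mul_pos ha0 (hxs i)
  have hypos : ∀ n i, 0 < y n i := msp_iter_pos hT hapos
  have hysucc : ∀ n, y (n + 1) = T (y n) := fun n => Function.iterate_succ_apply' T n _
  have hy0 : y 0 = a • xs := rfl
  have hlb : ∀ n, xs ≤ y n := by
    intro n
    induction n with
    | zero =>
      intro i
      rw [hy0]
      simp only [Pi.smul_apply, smul_eq_mul]
      nlinarith [hxs i]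
    | succ n ih =>
      rw [hysucc, ← hfix]
      exact msp_mono hT hxs (hypos n) ih
  have hdec : ∀ n, y (n + 1) ≤ y n := by
    intro n
    induction n with
    | zero =>
      intro i
      have h := msp_scale hT ha hxs i
      rw [hfix] at h
      rw [hysucc 0, hy0]
      simp only [Pi.smul_apply, smul_eq_mul]
      exact le_of_lt h
    | succ n ih =>
      calc y (n+2) = T (y (n+1)) := hysucc (n+1)
        _ ≤ T (y n) := msp_mono hT (hypos (n+1)) (hypos n) ih
        _ = y (n+1) := (hysucc n).symm
  set z : Fin N → ℝ := fun i => ⨅ n, y n i with hz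
  have hbdd : ∀ i, BddBelow (Set.range fun n => y n i) := fun i =>
    ⟨xs i, by rintro _ ⟨n, rfl⟩; exact hlb n i⟩
  have hanti : ∀ i, Antitone fun n => y n i := fun i =>
    antitone_nat_of_succ_le fun n => hdec n i
  have hty : ∀ i, Tendsto (fun n => y n i) atTop (nhds (z i)) := fun i =>
    tendsto_atTop_ciInf (hanti i) (hbdd i)
  have hzlb : xs ≤ z := fun i => le_ciInf fun n => hlb n i
  have hzpos : ∀ i, 0 < z i := fun i => lt_of_lt_of_le (hxs i) (hzlb i)
  have hzley : ∀ n, z ≤ y n := fun n i => ciInf_le (hbdd i) n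
  have htysucc : ∀ i, Tendsto (fun n => y (n+1) i) atTop (nhds (z i)) := fun i =>
    (hty i).comp (tendsto_add_atTop_nat 1)
  have hTz_le : ∀ i, T z i ≤ z i := by
    intro i
    refine ge_of_tendsto (htysucc i) (Filter.Eventually.of_forall fun n => ?_)
    rw [hysucc n]
    exact msp_mono hT hzpos (hypos n) (hzley n) i
  have hle_Tz : ∀ i, z i ≤ T z i := by
    intro i
    by_contra h
    push_neg at h
    have hTzpos : 0 < T z i := msp_pos hT hzpos i
    obtain ⟨b, hb1, hb2⟩ := exists_between ((one_lt_div hTzpos).mpr h)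
    have hb0 : (0:ℝ) < b := lt_trans one_pos hb1
    have hbz : ∀ j, 0 < (b • z) j := fun j => by
      simp only [Pi.smul_apply, smul_eq_mul]
      exact mul_pos hb0 (hzpos j)
    have hev : ∀ᶠ n in atTop, y n ≤ b • z := by
      have h1 : ∀ j, ∀ᶠ n in atTop, y n j ≤ b * z j := fun j =>
        (hty j).eventually_le_const (by nlinarith [hzpos j])
      filter_upwards [Filter.eventually_all.mpr h1] with n hn j
      simpa [Pi.smul_apply, smul_eq_mul] using hn j
    have hev2 : ∀ᶠ n in atTop, y (n+1) i ≤ b * T z i := by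
      filter_upwards [hev] with n hn
      rw [hysucc n]
      calc T (y n) i ≤ T (b • z) i := msp_mono hT (hypos n) hbz hn i
        _ ≤ b * T z i := le_of_lt (msp_scale hT hb1 hzpos i)
    have h3 : z i ≤ b * T z i := le_of_tendsto (htysucc i) hev2
    have h4 : b * T z i < z i := (lt_div_iff₀ hTzpos).mp hb2
    linarith
  have hfz : T z = z := funext fun i => le_antisymm (hTz_le i) (hle_Tz i)
  have hzxs : z = xs := le_antisymm (msp_fix_le hT hzpos hxs hfz hfix) hzlb
  have : Tendsto y atTop (nhds z) := tendsto_pi_nhds.mpr hty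
  rwa [hzxs] at this

lemma msp_lower (hT : IsMSPMap T) {xs : Fin N → ℝ} (hxs : ∀ i, 0 < xs i)
    (hfix : T xs = xs) {a : ℝ} (ha : 1 < a) :
    Tendsto (fun n => T^[n] (a⁻¹ • xs)) atTop (nhds xs) := by
  have ha0 : (0:ℝ) < a := lt_trans one_pos ha
  have hainv : (0:ℝ) < a⁻¹ := inv_pos.mpr ha0
  have hainv1 : a⁻¹ < 1 := inv_lt_one_of_one_lt₀ ha
  set u : ℕ → Fin N → ℝ := fun n => T^[n] (a⁻¹ • xs) with hu
  have hapos : ∀ i, 0 < (a⁻¹ • xs) i := fun i => by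
    simp only [Pi.smul_apply, smul_eq_mul]
    exact mul_pos hainv (hxs i)
  have hupos : ∀ n i, 0 < u n i := msp_iter_pos hT hapos
  have husucc : ∀ n, u (n + 1) = T (u n) := fun n => Function.iterate_succ_apply' T n _
  have hu0 : u 0 = a⁻¹ • xs := rfl
  have hub : ∀ n, u n ≤ xs := by
    intro n
    induction n with
    | zero =>
      intro i
      rw [hu0]
      simp only [Pi.smul_apply, smul_eq_mul]
      nlinarith [hxs i]
    | succ n ih =>
      rw [husucc, ← hfix]
      exact msp_mono hT (hupos n) hxs ih
  have hsm : a • (a⁻¹ • xs) = xs := by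
    rw [smul_smul, mul_inv_cancel₀ ha0.ne', one_smul]
  have hinc : ∀ n, u n ≤ u (n + 1) := by
    intro n
    induction n with
    | zero =>
      intro i
      have h := msp_scale hT ha hapos i
      rw [hsm, hfix] at h
      rw [husucc 0, hu0]
      simp only [Pi.smul_apply, smul_eq_mul]
      have h2 : a⁻¹ * xs i < T (a⁻¹ • xs) i := by
        have h3 := mul_lt_mul_of_pos_left h hainv
        rwa [← mul_assoc, inv_mul_cancel₀ ha0.ne', one_mul] at h3
      exact le_of_lt h2
    | succ n ih =>
      calc u (n+1) = T (u n) := husucc n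
        _ ≤ T (u (n+1)) := msp_mono hT (hupos n) (hupos (n+1)) ih
        _ = u (n+2) := (husucc (n+1)).symm
  set w : Fin N → ℝ := fun i => ⨆ n, u n i with hw
  have hbdd : ∀ i, BddAbove (Set.range fun n => u n i) := fun i =>
    ⟨xs i, by rintro _ ⟨n, rfl⟩; exact hub n i⟩
  have hmono : ∀ i, Monotone fun n => u n i := fun i =>
    monotone_nat_of_le_succ fun n => hinc n i
  have htu : ∀ i, Tendsto (fun n => u n i) atTop (nhds (w i)) := fun i =>
    tendsto_atTop_ciSup (hmono i) (hbdd i)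
  have hwub : w ≤ xs := fun i => ciSup_le fun n => hub n i
  have hulew : ∀ n, u n ≤ w := fun n i => le_ciSup (hbdd i) n
  have hwpos : ∀ i, 0 < w i := fun i => lt_of_lt_of_le (hupos 0 i) (hulew 0 i)
  have htusucc : ∀ i, Tendsto (fun n => u (n+1) i) atTop (nhds (w i)) := fun i =>
    (htu i).comp (tendsto_add_atTop_nat 1)
  have hle_Tw : ∀ i, w i ≤ T w i := by
    intro i
    refine le_of_tendsto (htusucc i) (Filter.Eventually.of_forall fun n => ?_)
    rw [husucc n]
    exact msp_mono hT (hupos n) hwpos (hulew n) i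
  have hTw_le : ∀ i, T w i ≤ w i := by
    intro i
    by_contra h
    push_neg at h
    have hTwpos : 0 < T w i := msp_pos hT hwpos i
    obtain ⟨b, hb1, hb2⟩ := exists_between ((one_lt_div (hwpos i)).mpr h)
    have hb0 : (0:ℝ) < b := lt_trans one_pos hb1
    have hbinv : (0:ℝ) < b⁻¹ := inv_pos.mpr hb0
    have hbinv1 : b⁻¹ < 1 := inv_lt_one_of_one_lt₀ hb1
    have hbw : ∀ j, 0 < (b⁻¹ • w) j := fun j => by
      simp only [Pi.smul_apply, smul_eq_mul]
      exact mul_pos hbinv (hwpos j)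
    have hev : ∀ᶠ n in atTop, b⁻¹ • w ≤ u n := by
      have h1 : ∀ j, ∀ᶠ n in atTop, b⁻¹ * w j ≤ u n j := fun j =>
        (htu j).eventually_const_le (by nlinarith [hwpos j])
      filter_upwards [Filter.eventually_all.mpr h1] with n hn j
      simpa [Pi.smul_apply, smul_eq_mul] using hn j
    have hsmb : b • (b⁻¹ • w) = w := by
      rw [smul_smul, mul_inv_cancel₀ hb0.ne', one_smul]
    have hev2 : ∀ᶠ n in atTop, T w i ≤ b * u (n+1) i := by
      filter_upwards [hev] with n hn
      rw [husucc n]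
      calc T w i = T (b • (b⁻¹ • w)) i := by rw [hsmb]
        _ ≤ b * T (b⁻¹ • w) i := le_of_lt (msp_scale hT hb1 hbw i)
        _ ≤ b * T (u n) i := by
            have := msp_mono hT hbw (hupos n) hn i
            nlinarith
    have h3 : T w i ≤ b * w i := by
      refine ge_of_tendsto ?_ hev2
      have : Tendsto (fun n => b * u (n+1) i) atTop (nhds (b * w i)) :=
        (htusucc i).const_mul b
      exact this
    have h4 : b * w i < T w i := (lt_div_iff₀ (hwpos i)).mp hb2
    linarith
  have hfw : T w = w := funext fun i => le_antisymm (hTw_le i) (hle_Tw i)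
  have hwxs : w = xs := le_antisymm hwub (msp_fix_le hT hxs hwpos hfix hfw)
  have : Tendsto u atTop (nhds w) := tendsto_pi_nhds.mpr htu
  rwa [hwxs] at this

end Aux

/-- If an MSP mapping `T` has a fixed point `x* ∈ ℝ₊₊^N`, then from every positive
starting point the fixed point iteration `xₙ₊₁ = T(xₙ)` converges to `x*`. -/
theorem stmt14 {N : ℕ} (T : (Fin N → ℝ) → (Fin N → ℝ)) (hT : IsMSPMap T)
    (xs : Fin N → ℝ) (hxs : ∀ i, 0 < xs i) (hfix : T xs = xs) :
    ∀ x : ℕ → (Fin N → ℝ), (∀ i, 0 < x 0 i) → (∀ n, x (n + 1) = T (x n)) →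
      Filter.Tendsto x Filter.atTop (nhds xs) := by
  intro x hx0 hrec
  set α : ℝ := 2 + ∑ j, (x 0 j / xs j + xs j / x 0 j) with hα
  have hnn : ∀ j : Fin N, (0:ℝ) ≤ x 0 j / xs j + xs j / x 0 j := fun j =>
    add_nonneg (div_nonneg (hx0 j).le (hxs j).le) (div_nonneg (hxs j).le (hx0 j).le)
  have hsum_nonneg : (0:ℝ) ≤ ∑ j, (x 0 j / xs j + xs j / x 0 j) :=
    Finset.sum_nonneg fun j _ => hnn j
  have hα1 : (1:ℝ) < α := by rw [hα]; linarith
  have hα0 : (0:ℝ) < α := lt_trans one_pos hα1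
  have hterm : ∀ i, x 0 i / xs i + xs i / x 0 i ≤ ∑ j, (x 0 j / xs j + xs j / x 0 j) :=
    fun i => Finset.single_le_sum (f := fun j => x 0 j / xs j + xs j / x 0 j)
      (fun j _ => hnn j) (Finset.mem_univ i)
  have hub0 : x 0 ≤ α • xs := by
    intro i
    have h1 : x 0 i / xs i ≤ α := by
      have h2 : (0:ℝ) ≤ xs i / x 0 i := div_nonneg (hxs i).le (hx0 i).le
      have := hterm i
      rw [hα]; linarith
    have := (div_le_iff₀ (hxs i)).mp h1
    simpa [Pi.smul_apply, smul_eq_mul, mul_comm] using this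
  have hlb0 : α⁻¹ • xs ≤ x 0 := by
    intro i
    have h1 : xs i / x 0 i ≤ α := by
      have h2 : (0:ℝ) ≤ x 0 i / xs i := div_nonneg (hx0 i).le (hxs i).le
      have := hterm i
      rw [hα]; linarith
    have h3 : xs i ≤ α * x 0 i := by
      have := (div_le_iff₀ (hx0 i)).mp h1
      linarith [this]
    have : α⁻¹ * xs i ≤ x 0 i := by
      rw [inv_mul_le_iff₀ hα0]
      exact h3
    simpa [Pi.smul_apply, smul_eq_mul] using this
  have hxn : ∀ n, x n = T^[n] (x 0) := by
    intro n
    induction n with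
    | zero => rfl
    | succ n ih =>
      rw [hrec n, ih]
      exact (Function.iterate_succ_apply' T n (x 0)).symm
  have hαpos : ∀ i, 0 < (α • xs) i := fun i => by
    simp only [Pi.smul_apply, smul_eq_mul]
    exact mul_pos hα0 (hxs i)
  have hαinvpos : ∀ i, 0 < (α⁻¹ • xs) i := fun i => by
    simp only [Pi.smul_apply, smul_eq_mul]
    exact mul_pos (inv_pos.mpr hα0) (hxs i)
  rw [tendsto_pi_nhds]
  intro i
  have hlow := tendsto_pi_nhds.mp (msp_lower hT hxs hfix hα1) i
  have hhigh := tendsto_pi_nhds.mp (msp_upper hT hxs hfix hα1) i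
  refine tendsto_of_tendsto_of_tendsto_of_le_of_le hlow hhigh ?_ ?_
  · intro n
    show T^[n] (α⁻¹ • xs) i ≤ x n i
    rw [hxn n]
    exact msp_iter_mono hT hαinvpos hx0 hlb0 n i
  · intro n
    show x n i ≤ T^[n] (α • xs) i
    rw [hxn n]
    exact msp_iter_mono hT hx0 hαpos hub0 n i
end

section
/- Define f̄ : ℝ₊² → ℝ₊₊ by f̄(x₁, x₂) = 1 + x₁ + √x₂ + max{x₁ − 1, 0}. Then the restriction of f̄ to ℝ₊₊² is an MSP function, yet f̄ fails the scalability property on the boundary of the nonnegative cone: for the point x = (1, 0) ∉ ℝ₊₊², one has f̄(αx) = α f̄(x) for every α > 1. -/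
open MeasureTheory Filter

/-- The function `f̄(x₁, x₂) = 1 + x₁ + √x₂ + max (x₁ - 1) 0` restricts to an MSP
function on `ℝ₊₊²`, yet at the boundary point `x = (1, 0)` scalability fails:
`f̄(α • x) = α * f̄(x)` for every `α > 1`. -/
theorem stmt17 :
    IsMSPFun (fun x : Fin 2 → ℝ => 1 + x 0 + Real.sqrt (x 1) + max (x 0 - 1) 0) ∧
    ∀ α : ℝ, 1 < α →
      (fun x : Fin 2 → ℝ => 1 + x 0 + Real.sqrt (x 1) + max (x 0 - 1) 0)
          (α • ![(1 : ℝ), 0]) =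
        α * (fun x : Fin 2 → ℝ => 1 + x 0 + Real.sqrt (x 1) + max (x 0 - 1) 0)
          ![(1 : ℝ), 0] := by
  constructor
  · refine ⟨?_, ?_, ?_, ?_⟩
    · intro x hx
      have h0 := hx 0
      have h1 : (0:ℝ) ≤ Real.sqrt (x 1) := Real.sqrt_nonneg _
      have h2 : (0:ℝ) ≤ max (x 0 - 1) 0 := le_max_right _ _
      simp only []
      linarith
    · intro x y hx hy hxy
      have h0 : x 0 ≤ y 0 := hxy 0
      have h1 : Real.sqrt (x 1) ≤ Real.sqrt (y 1) := Real.sqrt_le_sqrt (hxy 1)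
      have h2 : max (x 0 - 1) 0 ≤ max (y 0 - 1) 0 := max_le_max (by linarith) le_rfl
      simp only []
      linarith
    · intro α hα x hx
      have hα0 : (0:ℝ) < α := by linarith
      simp only [Pi.smul_apply, smul_eq_mul]
      have h1 : Real.sqrt (α * x 1) < α * Real.sqrt (x 1) := by
        rw [Real.sqrt_mul hα0.le]
        exact mul_lt_mul_of_pos_right ((Real.sqrt_lt' hα0).2 (by nlinarith)) (Real.sqrt_pos.2 (hx 1))
      have h2 : max (α * x 0 - 1) 0 ≤ α * max (x 0 - 1) 0 + (α - 1) := by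
        have hm1 : x 0 - 1 ≤ max (x 0 - 1) 0 := le_max_left _ _
        have hm2 : (0:ℝ) ≤ max (x 0 - 1) 0 := le_max_right _ _
        apply max_le
        · nlinarith
        · nlinarith
      nlinarith
    · have hne : ((fun x : Fin 2 → ℝ => 1 + x 0 + Real.sqrt (x 1) + max (x 0 - 1) 0) '' PosCone 2).Nonempty := by
        exact ⟨_, ⟨fun _ => 1, fun i => one_pos, rfl⟩⟩
      have hlb : ∀ b ∈ (fun x : Fin 2 → ℝ => 1 + x 0 + Real.sqrt (x 1) + max (x 0 - 1) 0) '' PosCone 2, (1:ℝ) ≤ b := by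
        rintro b ⟨x, hx, rfl⟩
        have h0 := hx 0
        have h1 : (0:ℝ) ≤ Real.sqrt (x 1) := Real.sqrt_nonneg _
        have h2 : (0:ℝ) ≤ max (x 0 - 1) 0 := le_max_right _ _
        simp only []
        linarith
      exact lt_of_lt_of_le one_pos (le_csInf hne hlb)
  · intro α hα
    simp only [Pi.smul_apply, smul_eq_mul, Matrix.cons_val_zero, Matrix.cons_val_one,
      Matrix.head_cons, mul_one, mul_zero, Real.sqrt_zero]
    rw [max_eq_left (by linarith), max_eq_right (by norm_num)]
    ring
end
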